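/- Let S be a nonstandard Z-graded polynomial ring, M a finitely generated graded S-module with M_0 ≠ 0, M_{<0} = 0, and suppose some degree-1 variable x of S is a non-zero-divisor on M. If σ ∈ ⋀W ⊗_k M is a Koszul cycle representing a nonzero class in Tor_*^S(k, M), written as σ = Σ terms α ⊗ β ⊗ m with α an exterior product of degree-1 basis elements of W_1 and β an exterior product of basis elements of W_{>1}, then not every term of σ can have α equal to the full product of all degree-1 variables. (Equivalently: ν(σ) ≠ 0, where ν(σ) is the maximal number of degree-1 basis elements absent from some term's α.) -/
import Mathlib


open MvPolynomial

/-- The Koszul differential on `⋀W ⊗ M`, in the basis description: a chain of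
homological degree `i` is a function `c` on subsets `s ⊆ {0,...,n}` (supported on
subsets of cardinality `i`), with `c s ∈ M` the coefficient of `e_{s} = ⋀_{t ∈ s} e_t`;
the differential is `(∂c)(s) = ∑_{t ∉ s} ± x_t • c (insert t s)`. -/
noncomputable def koszulDiff (k : Type) [Field k] (n : ℕ)
    (M : Type) [AddCommGroup M] [Module (MvPolynomial (Fin (n + 1)) k) M]
    (c : Finset (Fin (n + 1)) → M) : Finset (Fin (n + 1)) → M :=
  fun s => ∑ t : Fin (n + 1),
    if t ∈ s then 0
    else ((-1 : ℤ) ^ (s.filter (fun u => u < t)).card) •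
      ((X t : MvPolynomial (Fin (n + 1)) k) • c (insert t s))

/-!
STATEMENT 19: `S = Sym W` a nonstandard graded polynomial ring (`deg x_t = d t`),
`M` a finitely generated graded `S`-module with `M_0 ≠ 0`, `M_{<0} = 0`, and suppose
the degree-one variable `x_ℓ` is a non-zero-divisor on `M`.  If `σ ∈ ⋀W ⊗ M` is a
Koszul cycle of homological degree `i` representing a *nonzero* class in
`Tor_*^S(k, M)`, then, writing `σ = ∑ α ⊗ β ⊗ m` with `α` an exterior product of
degree-one basis vectors and `β` one of higher-degree basis vectors, not every term
of `σ` can have `α` equal to the full product of all degree-one variables; i.e. some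
nonzero coefficient `σ s ≠ 0` has `s` omitting some degree-one variable
(equivalently `ν(σ) ≠ 0`).
-/
theorem stmt_19 (k : Type) [Field k] (n : ℕ) (d : Fin (n + 1) → ℕ) (hpos : ∀ t, 0 < d t)
    (M : Type) [AddCommGroup M] [Module (MvPolynomial (Fin (n + 1)) k) M]
    [Module k M] [IsScalarTower k (MvPolynomial (Fin (n + 1)) k) M]
    (𝒜 : ℤ → Submodule k M) (hdec : DirectSum.IsInternal 𝒜)
    (hgr : ∀ (t : Fin (n + 1)) (e : ℤ), ∀ m ∈ 𝒜 e,
      (X t : MvPolynomial (Fin (n + 1)) k) • m ∈ 𝒜 (e + d t))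
    (hfg : Module.Finite (MvPolynomial (Fin (n + 1)) k) M)
    (h0 : 𝒜 0 ≠ ⊥) (hlow : ∀ e : ℤ, e < 0 → 𝒜 e = ⊥)
    (ℓ : Fin (n + 1)) (hℓ : d ℓ = 1)
    (hreg : ∀ m : M, (X ℓ : MvPolynomial (Fin (n + 1)) k) • m = 0 → m = 0)
    (i : ℕ) (σ : Finset (Fin (n + 1)) → M)
    (hsupp : ∀ s, σ s ≠ 0 → s.card = i)
    (hcycle : koszulDiff k n M σ = 0)
    (hnonzero : σ ≠ 0)
    -- `σ` is not a boundary, i.e. it represents a nonzero homology class: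
    (hclass : ∀ τ : Finset (Fin (n + 1)) → M,
      (∀ s, τ s ≠ 0 → s.card = i + 1) → koszulDiff k n M τ ≠ σ) :
    ∃ s : Finset (Fin (n + 1)), σ s ≠ 0 ∧ ¬(∀ t : Fin (n + 1), d t = 1 → t ∈ s) := by
  by_contra h
  push_neg at h
  -- every supported set contains ℓ
  have hmem : ∀ s, ℓ ∉ s → σ s = 0 := fun s hs => by
    by_contra hσ; exact hs (h s hσ ℓ hℓ)
  apply hnonzero
  funext s
  show σ s = (0 : M)
  by_cases hin : ℓ ∈ s
  · have hc : koszulDiff k n M σ (s.erase ℓ) = 0 := by rw [hcycle]; rfl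
    unfold koszulDiff at hc
    rw [Finset.sum_eq_single ℓ] at hc
    · rw [if_neg (Finset.notMem_erase ℓ s), Finset.insert_erase hin] at hc
      set c := ((s.erase ℓ).filter (fun u => u < ℓ)).card with hcdef
      have h2 : ((-1 : ℤ) ^ c) • (((-1 : ℤ) ^ c) •
          ((X ℓ : MvPolynomial (Fin (n + 1)) k) • σ s)) = 0 := by
        rw [hc, smul_zero]
      rw [smul_smul, ← pow_add, Even.neg_one_pow ⟨c, rfl⟩, one_smul] at h2
      exact hreg _ h2
    · intro b _ hb
      by_cases hbs : b ∈ s.erase ℓ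
      · rw [if_pos hbs]
      · rw [if_neg hbs]
        have : σ (insert b (s.erase ℓ)) = 0 := by
          apply hmem
          simp only [Finset.mem_insert, Finset.mem_erase]
          rintro (rfl | ⟨hne, _⟩)
          · exact hb rfl
          · exact hne rfl
        rw [this, smul_zero, smul_zero]
    · intro hℓu; exact absurd (Finset.mem_univ ℓ) hℓu
  · exact hmem s hin
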